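/- For n even, the block-diagonal antisymmetric matrix S = I_{n/2} ⊗ [[0,1],[−1,0]] (i.e. S = Σ_{i=0}^{n/2−1} (e_{2i+1,2i+2} − e_{2i+2,2i+1})) solves the dual classical reflection equation γ₁γ₂ a' − a' γ₁γ₂ + γ₂ b' γ₁ − γ₁ c' γ₂ = 0, where a' = (1/2) Σ_{i,j} sgn(i−j) e_{ij} ⊗ e_{ji}, b' = −(1/2) Σ_{i,j} (sgn(i−j)+1) e_{ij} ⊗ e_{ij}, and c'₁₂ = b'₂₁. -/

import Mathlib

open Matrix BigOperators
open scoped Kronecker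

/-- Elementary matrix `e_{ij}`. -/
noncomputable def E (n : ℕ) (i j : Fin n) : Matrix (Fin n) (Fin n) ℂ :=
  Matrix.single i j 1

/-- `sgn(i - j)` as a complex number, with `sgn(0) = 0`. -/
def sg (n : ℕ) (i j : Fin n) : ℂ := ((((i : ℤ) - (j : ℤ)).sign : ℤ) : ℂ)

/-- Degasperis–Procesi `a' = (1/2) Σ sgn(i−j) e_{ij} ⊗ e_{ji}`. -/
noncomputable def a' (n : ℕ) : Matrix (Fin n × Fin n) (Fin n × Fin n) ℂ :=
  (1/2 : ℂ) • ∑ i : Fin n, ∑ j : Fin n, sg n i j • (E n i j ⊗ₖ E n j i)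

/-- Degasperis–Procesi `b' = −(1/2) Σ (sgn(i−j)+1) e_{ij} ⊗ e_{ij}`. -/
noncomputable def b' (n : ℕ) : Matrix (Fin n × Fin n) (Fin n × Fin n) ℂ :=
  (-(1/2) : ℂ) • ∑ i : Fin n, ∑ j : Fin n, (sg n i j + 1) • (E n i j ⊗ₖ E n i j)

/-- The permutation operator `P = Σ_{i,j} e_{ij} ⊗ e_{ji}`. -/
noncomputable def Pmat (n : ℕ) : Matrix (Fin n × Fin n) (Fin n × Fin n) ℂ :=
  ∑ i : Fin n, ∑ j : Fin n, E n i j ⊗ₖ E n j i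

/-- `c' = b'₂₁ = P b' P`. -/
noncomputable def c' (n : ℕ) : Matrix (Fin n × Fin n) (Fin n × Fin n) ℂ :=
  Pmat n * b' n * Pmat n

/-- The block-diagonal antisymmetric matrix
`S = Σ_{ℓ=0}^{m−1} (e_{2ℓ+1,2ℓ+2} − e_{2ℓ+2,2ℓ+1})` (1-based indexing) on `ℂ^{2m}`. -/
noncomputable def Smat (m : ℕ) : Matrix (Fin (2 * m)) (Fin (2 * m)) ℂ :=
  ∑ ℓ : Fin m,
    (E (2 * m) ⟨2 * ℓ.1, by have := ℓ.isLt; omega⟩ ⟨2 * ℓ.1 + 1, by have := ℓ.isLt; omega⟩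
     - E (2 * m) ⟨2 * ℓ.1 + 1, by have := ℓ.isLt; omega⟩ ⟨2 * ℓ.1, by have := ℓ.isLt; omega⟩)

/-! ### Auxiliary scalar functions -/

/-- Entry function of `Smat` on natural numbers. -/
noncomputable def Sf (a b : ℕ) : ℂ :=
  if a % 2 = 0 ∧ b = a + 1 then 1 else if b % 2 = 0 ∧ a = b + 1 then -1 else 0

/-- Sign function on natural numbers. -/
noncomputable def G (a b : ℕ) : ℂ := if a < b then -1 else if b < a then 1 else 0

lemma sg_eq (n : ℕ) (i j : Fin n) : sg n i j = G i.1 j.1 := by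
  unfold sg G
  rcases lt_trichotomy (i : ℕ) (j : ℕ) with h | h | h
  · rw [if_pos h, Int.sign_eq_neg_one_of_neg (by omega)]
    norm_num
  · have h0 : ((i : ℕ) : ℤ) - ((j : ℕ) : ℤ) = 0 := by omega
    rw [if_neg (by omega), if_neg (by omega), h0]
    simp
  · rw [if_neg (by omega), if_pos h, Int.sign_eq_one_of_pos (by omega)]
    norm_num

lemma Sf_cases {a b : ℕ} (h : Sf a b ≠ 0) :
    (a % 2 = 0 ∧ b = a + 1) ∨ (b % 2 = 0 ∧ a = b + 1) := by
  unfold Sf at h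
  split_ifs at h with h1 h2
  · exact Or.inl h1
  · exact Or.inr h2
  · exact absurd rfl h

lemma Sf_antisymm (a b : ℕ) : Sf b a = -Sf a b := by
  unfold Sf
  split_ifs <;> first | (exfalso; omega) | norm_num

lemma G_cancel (a b c d : ℕ) (h1 : Sf a b ≠ 0) (h2 : Sf c d ≠ 0)
    (hne : ¬(d = a ∧ b = c)) : G b d = G a c := by
  rcases Sf_cases h1 with ⟨e1, e2⟩ | ⟨e1, e2⟩ <;>
    rcases Sf_cases h2 with ⟨e3, e4⟩ | ⟨e3, e4⟩ <;>
    · unfold G; split_ifs <;> first | rfl | (exfalso; omega)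

lemma key2 (p q r s : ℕ) :
    Sf p s * Sf q r * (G s r - G p q) + Sf p q * Sf r s * (G q r - G p s) = 0 := by
  by_cases hps : Sf p s = 0
  · by_cases hpq : Sf p q = 0
    · simp [hps, hpq]
    · by_cases hrs : Sf r s = 0
      · simp [hps, hrs]
      · have hne : ¬(r = p ∧ q = s) := by
          rintro ⟨h1, h2⟩
          rw [h2] at hpq
          exact hpq hps
        have hsr : Sf s r ≠ 0 := by
          rw [Sf_antisymm r s, neg_ne_zero]; exact hrs
        have h := G_cancel p q s r hpq hsr hne
        rw [hps, h]; ring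
  · by_cases hqr : Sf q r = 0
    · by_cases hpq : Sf p q = 0
      · simp [hqr, hpq]
      · by_cases hrs : Sf r s = 0
        · simp [hqr, hrs]
        · have hne : ¬(r = p ∧ q = s) := by
            rintro ⟨h1, h2⟩
            rw [h1, h2] at hqr
            rw [Sf_antisymm p s, neg_eq_zero] at hqr
            exact hps hqr
          have hsr : Sf s r ≠ 0 := by
            rw [Sf_antisymm r s, neg_ne_zero]; exact hrs
          have h := G_cancel p q s r hpq hsr hne
          rw [hqr, h]; ring
    · by_cases hpq : Sf p q = 0
      · have hne : ¬(r = p ∧ s = q) := by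
          rintro ⟨h1, h2⟩
          rw [← h2] at hpq
          exact hps hpq
        have h := G_cancel p s q r hps hqr hne
        rw [hpq, h]; ring
      · by_cases hrs : Sf r s = 0
        · have hne : ¬(r = p ∧ s = q) := by
            rintro ⟨h1, h2⟩
            rw [h1, h2] at hrs
            exact hpq hrs
          have h := G_cancel p s q r hps hqr hne
          rw [hrs, h]; ring
        · have c1 := Sf_cases hps
          have c2 := Sf_cases hqr
          have c3 := Sf_cases hpq
          have hq : s = q := by omega
          have hr : r = p := by omega
          rw [hq, hr]
          have ha := Sf_antisymm p q
          linear_combination (Sf p q * (G q p - G p q)) * ha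

/-! ### Entry formulas -/

lemma a'_apply (n : ℕ) (p q r s : Fin n) :
    a' n (p, q) (r, s) = if r = q ∧ p = s then (1/2 : ℂ) * sg n p r else 0 := by
  rw [a']
  simp only [Matrix.smul_apply, Matrix.sum_apply, smul_eq_mul, kroneckerMap_apply,
    E, Matrix.single, of_apply]
  rw [Fintype.sum_eq_single p ?_]
  · rw [Fintype.sum_eq_single r ?_]
    · have h1 : (if p = p ∧ r = r then (1 : ℂ) else 0) = 1 := by simp
      rw [h1, one_mul]
      split_ifs with h
      · ring
      · ring
    · intro j hj
      rw [if_neg (fun h => hj h.2), zero_mul, mul_zero]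
  · intro i hi
    apply Finset.sum_eq_zero
    intro j _
    rw [if_neg (fun h => hi h.1), zero_mul, mul_zero]

lemma b'_apply (n : ℕ) (p q r s : Fin n) :
    b' n (p, q) (r, s) = if p = q ∧ r = s then (-(1/2) : ℂ) * (sg n p r + 1) else 0 := by
  rw [b']
  simp only [Matrix.smul_apply, Matrix.sum_apply, smul_eq_mul, kroneckerMap_apply,
    E, Matrix.single, of_apply]
  rw [Fintype.sum_eq_single p ?_]
  · rw [Fintype.sum_eq_single r ?_]
    · have h1 : (if p = p ∧ r = r then (1 : ℂ) else 0) = 1 := by simp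
      rw [h1, one_mul]
      split_ifs with h
      · ring
      · ring
    · intro j hj
      rw [if_neg (fun h => hj h.2), zero_mul, mul_zero]
  · intro i hi
    apply Finset.sum_eq_zero
    intro j _
    rw [if_neg (fun h => hi h.1), zero_mul, mul_zero]

lemma Pmat_apply (n : ℕ) (p q r s : Fin n) :
    Pmat n (p, q) (r, s) = if r = q ∧ p = s then (1 : ℂ) else 0 := by
  rw [Pmat]
  simp only [Matrix.sum_apply, kroneckerMap_apply, E, Matrix.single, of_apply]
  rw [Fintype.sum_eq_single p ?_]
  · rw [Fintype.sum_eq_single r ?_]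
    · have h1 : (if p = p ∧ r = r then (1 : ℂ) else 0) = 1 := by simp
      rw [h1, one_mul]
    · intro j hj
      rw [if_neg (fun h => hj h.2), zero_mul]
  · intro i hi
    apply Finset.sum_eq_zero
    intro j _
    rw [if_neg (fun h => hi h.1), zero_mul]

lemma Smat_apply (m : ℕ) (i j : Fin (2 * m)) : Smat m i j = Sf i.1 j.1 := by
  have hi := i.2
  rw [Smat, Matrix.sum_apply]
  by_cases hm : i.1 / 2 < m
  · rw [Fintype.sum_eq_single ⟨i.1 / 2, hm⟩ ?_]
    · simp only [Matrix.sub_apply, E, Matrix.single, of_apply, Fin.ext_iff, Sf]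
      split_ifs <;> first | (exfalso; omega) | norm_num
    · intro ℓ hℓ
      have hℓ' : ℓ.1 ≠ i.1 / 2 := fun h => hℓ (Fin.ext h)
      simp only [Matrix.sub_apply, E, Matrix.single, of_apply, Fin.ext_iff]
      rw [if_neg (by omega), if_neg (by omega)]
      ring
  · omega

/-! ### Product entry formulas -/

section Products

variable (n : ℕ) (S T : Matrix (Fin n) (Fin n) ℂ) (p q r s : Fin n)

lemma kmul_a'_apply :
    ((S ⊗ₖ T) * a' n) (p, q) (r, s) = (1/2 : ℂ) * sg n s r * (S p s * T q r) := by
  rw [Matrix.mul_apply]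
  rw [Fintype.sum_eq_single ((s, r) : Fin n × Fin n) ?_]
  · rw [a'_apply]
    rw [if_pos (show r = r ∧ s = s from ⟨rfl, rfl⟩)]
    simp only [kroneckerMap_apply]
    all_goals ring
  · rintro ⟨u, v⟩ huv
    rw [a'_apply, if_neg, mul_zero]
    rintro ⟨h1, h2⟩
    exact huv (by rw [← h1, h2])

lemma a'_kmul_apply :
    (a' n * (S ⊗ₖ T)) (p, q) (r, s) = (1/2 : ℂ) * sg n p q * (S q r * T p s) := by
  rw [Matrix.mul_apply]
  rw [Fintype.sum_eq_single ((q, p) : Fin n × Fin n) ?_]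
  · rw [a'_apply]
    rw [if_pos (show q = q ∧ p = p from ⟨rfl, rfl⟩)]
    simp only [kroneckerMap_apply]
    all_goals ring
  · rintro ⟨u, v⟩ huv
    rw [a'_apply, if_neg, zero_mul]
    rintro ⟨h1, h2⟩
    exact huv (by rw [h1, ← h2])

lemma one_kmul_b'_apply (x y : Fin n) :
    (((1 : Matrix (Fin n) (Fin n) ℂ) ⊗ₖ S) * b' n) (p, q) (x, y) =
      if x = y then S q p * (-(1/2 : ℂ) * (sg n p x + 1)) else 0 := by
  rw [Matrix.mul_apply]
  rw [Fintype.sum_eq_single ((p, p) : Fin n × Fin n) ?_]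
  · rw [b'_apply]
    simp only [kroneckerMap_apply, Matrix.one_apply_eq, true_and]
    by_cases h : x = y
    · rw [if_pos h, if_pos h]
      ring
    · rw [if_neg h, if_neg h, mul_zero]
  · rintro ⟨u, v⟩ huv
    rw [b'_apply]
    simp only [kroneckerMap_apply]
    by_cases hu : u = p
    · subst hu
      have hv : v ≠ u := fun h => huv (by rw [h])
      rw [if_neg (fun hh => hv hh.1.symm), mul_zero]
    · rw [Matrix.one_apply_ne (fun h => hu h.symm), zero_mul, zero_mul]

lemma b'_sandwich₁ :
    (((1 : Matrix (Fin n) (Fin n) ℂ) ⊗ₖ S) * b' n *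
        (T ⊗ₖ (1 : Matrix (Fin n) (Fin n) ℂ))) (p, q) (r, s) =
      S q p * (-(1/2 : ℂ) * (sg n p s + 1)) * T s r := by
  rw [Matrix.mul_apply]
  rw [Fintype.sum_eq_single ((s, s) : Fin n × Fin n) ?_]
  · rw [one_kmul_b'_apply, if_pos rfl]
    simp only [kroneckerMap_apply, Matrix.one_apply_eq]
    all_goals ring
  · rintro ⟨x, y⟩ hxy
    rw [one_kmul_b'_apply]
    by_cases hx : x = y
    · subst hx
      have hxs : x ≠ s := fun h => hxy (by rw [h])
      simp [Matrix.one_apply, hxs]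
    · rw [if_neg hx, zero_mul]

lemma kmul_one_b'_apply (x y : Fin n) :
    ((S ⊗ₖ (1 : Matrix (Fin n) (Fin n) ℂ)) * b' n) (p, q) (x, y) =
      if x = y then S p q * (-(1/2 : ℂ) * (sg n q x + 1)) else 0 := by
  rw [Matrix.mul_apply]
  rw [Fintype.sum_eq_single ((q, q) : Fin n × Fin n) ?_]
  · rw [b'_apply]
    simp only [kroneckerMap_apply, Matrix.one_apply_eq, true_and]
    by_cases h : x = y
    · rw [if_pos h, if_pos h]
      ring
    · rw [if_neg h, if_neg h, mul_zero]
  · rintro ⟨u, v⟩ huv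
    rw [b'_apply]
    simp only [kroneckerMap_apply]
    by_cases hv : v = q
    · subst hv
      have hu : u ≠ v := fun h => huv (by rw [h])
      rw [if_neg (fun hh => hu hh.1), mul_zero]
    · rw [Matrix.one_apply_ne (fun h => hv h.symm), mul_zero, zero_mul]

lemma b'_sandwich₂ :
    ((S ⊗ₖ (1 : Matrix (Fin n) (Fin n) ℂ)) * b' n *
        ((1 : Matrix (Fin n) (Fin n) ℂ) ⊗ₖ T)) (p, q) (r, s) =
      S p q * (-(1/2 : ℂ) * (sg n q r + 1)) * T r s := by
  rw [Matrix.mul_apply]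
  rw [Fintype.sum_eq_single ((r, r) : Fin n × Fin n) ?_]
  · rw [kmul_one_b'_apply, if_pos rfl]
    simp only [kroneckerMap_apply, Matrix.one_apply_eq]
    all_goals ring
  · rintro ⟨x, y⟩ hxy
    rw [kmul_one_b'_apply]
    by_cases hx : x = y
    · subst hx
      have hxr : x ≠ r := fun h => hxy (by rw [h])
      simp [Matrix.one_apply, hxr]
    · rw [if_neg hx, zero_mul]

end Products

lemma Pmat_b'_apply (n : ℕ) (p q x y : Fin n) :
    (Pmat n * b' n) (p, q) (x, y) =
      if q = p ∧ x = y then (-(1/2 : ℂ)) * (sg n q x + 1) else 0 := by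
  rw [Matrix.mul_apply]
  rw [Fintype.sum_eq_single ((q, p) : Fin n × Fin n) ?_]
  · rw [Pmat_apply, if_pos (show q = q ∧ p = p from ⟨rfl, rfl⟩), one_mul, b'_apply]
  · rintro ⟨u, v⟩ huv
    rw [Pmat_apply, if_neg, zero_mul]
    rintro ⟨h1, h2⟩
    exact huv (by rw [h1, ← h2])

lemma c'_eq (n : ℕ) : c' n = b' n := by
  ext ⟨p, q⟩ ⟨r, s⟩
  rw [c', Matrix.mul_apply]
  rw [Fintype.sum_eq_single ((s, r) : Fin n × Fin n) ?_]
  · rw [Pmat_b'_apply, Pmat_apply,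
      if_pos (show r = r ∧ s = s from ⟨rfl, rfl⟩), mul_one, b'_apply]
    by_cases h : p = q ∧ r = s
    · rw [if_pos ⟨h.1.symm, h.2.symm⟩, if_pos h, h.1, h.2]
    · rw [if_neg (fun hh => h ⟨hh.1.symm, hh.2.symm⟩), if_neg h]
  · rintro ⟨x, y⟩ hxy
    rw [Pmat_apply, if_neg, mul_zero]
    rintro ⟨h1, h2⟩
    exact hxy (by rw [← h1, h2])

theorem S_solves_reflection_equation (m : ℕ) :
    let n := 2 * m
    let γ₁ := Smat m ⊗ₖ (1 : Matrix (Fin n) (Fin n) ℂ)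
    let γ₂ := (1 : Matrix (Fin n) (Fin n) ℂ) ⊗ₖ Smat m
    γ₁ * γ₂ * a' n - a' n * (γ₁ * γ₂) + γ₂ * b' n * γ₁ - γ₁ * c' n * γ₂ = 0 := by
  intro n γ₁ γ₂
  show Smat m ⊗ₖ (1 : Matrix (Fin (2 * m)) (Fin (2 * m)) ℂ)
        * ((1 : Matrix (Fin (2 * m)) (Fin (2 * m)) ℂ) ⊗ₖ Smat m) * a' (2 * m)
      - a' (2 * m) * (Smat m ⊗ₖ (1 : Matrix (Fin (2 * m)) (Fin (2 * m)) ℂ)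
        * ((1 : Matrix (Fin (2 * m)) (Fin (2 * m)) ℂ) ⊗ₖ Smat m))
      + (1 : Matrix (Fin (2 * m)) (Fin (2 * m)) ℂ) ⊗ₖ Smat m * b' (2 * m)
        * (Smat m ⊗ₖ (1 : Matrix (Fin (2 * m)) (Fin (2 * m)) ℂ))
      - Smat m ⊗ₖ (1 : Matrix (Fin (2 * m)) (Fin (2 * m)) ℂ) * c' (2 * m)
        * ((1 : Matrix (Fin (2 * m)) (Fin (2 * m)) ℂ) ⊗ₖ Smat m) = 0
  rw [c'_eq, ← mul_kronecker_mul, Matrix.mul_one, Matrix.one_mul]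
  ext ⟨p, q⟩ ⟨r, s⟩
  rw [Matrix.sub_apply, Matrix.add_apply, Matrix.sub_apply, Matrix.zero_apply,
    kmul_a'_apply, a'_kmul_apply, b'_sandwich₁, b'_sandwich₂]
  simp only [Smat_apply, sg_eq]
  have ha1 := Sf_antisymm p.1 q.1
  have ha2 := Sf_antisymm r.1 s.1
  have hk := key2 p.1 q.1 r.1 s.1
  linear_combination (1/2 : ℂ) * hk
    + ((-(1/2 : ℂ)) * (G p.1 s.1 + 1) * Sf s.1 r.1) * ha1
    + ((-(1/2 : ℂ)) * (G p.1 s.1 + 1) * (-Sf p.1 q.1)) * ha2
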